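/- arXiv:0907.0790 — 8 statements merged into one kernel-verified Lean document; each statement's English description precedes it below -/
import Mathlib

section
/- The bivariate power series f(x,y) = ∑_{m,n≥0} ((2m+2n)!/((2m)!(2n)!)) x^m y^n equals the rational function (1-x-y)/(1-2x-2y-2xy+x^2+y^2) on a neighborhood of the origin. -/
/-!
Expanding `1 / (1 - u - v)` as a geometric series and then binomially gives
`∑ (i + j).choose i * u ^ i * v ^ j`, absolutely convergent for `‖u‖ + ‖v‖ < 1`. Averaging this
over the four sign changes `(±u, ±v)` keeps exactly the terms with `i` and `j` both even, and the
average of the four rational functions is `(1 - u² - v²) / ∏ (1 ± u ± v)`. Every point `(x, y)`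
near the origin is `(u², v²)` for some complex `u`, `v`.
-/

open scoped Nat

open Finset

theorem HasSum.of_sum_antidiagonal {E : Type*} [NormedAddCommGroup E] [CompleteSpace E]
    {f : ℕ × ℕ → E} {a : E} (hf : Summable fun n => ∑ p ∈ antidiagonal n, ‖f p‖)
    (ha : HasSum (fun n => ∑ p ∈ antidiagonal n, f p) a) : HasSum f a := by
  let e := HasAntidiagonal.sigmaAntidiagonalEquivProd (A := ℕ)
  have hnorm : Summable fun p => ‖f p‖ := by
    rw [← e.summable_iff]
    refine (summable_sigma_of_nonneg fun _ => norm_nonneg _).2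
      ⟨fun n => (hasSum_fintype _).summable, ?_⟩
    simpa [e, tsum_fintype, sum_attach (antidiagonal _) fun p => ‖f p‖] using hf
  rw [← e.hasSum_iff]
  refine ha.sigma_of_hasSum (fun n => ?_) (e.summable_iff.2 hnorm.of_norm)
  simpa [e, sum_attach] using hasSum_fintype (fun p : antidiagonal n => f p)

theorem sum_antidiagonal_choose_mul_pow_mul_pow {R : Type*} [CommSemiring R] (u v : R) (n : ℕ) :
    ∑ p ∈ antidiagonal n, ((p.1 + p.2).choose p.1 : R) * u ^ p.1 * v ^ p.2 = (u + v) ^ n := by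
  rw [(Commute.all u v).add_pow']
  refine sum_congr rfl fun p hp => ?_
  rw [mem_antidiagonal.mp hp, nsmul_eq_mul, mul_assoc]

theorem hasSum_choose_mul_pow_mul_pow {𝕜 : Type*} [NormedField 𝕜] [CompleteSpace 𝕜] {u v : 𝕜}
    (h : ‖u‖ + ‖v‖ < 1) :
    HasSum (fun p : ℕ × ℕ => ((p.1 + p.2).choose p.1 : 𝕜) * u ^ p.1 * v ^ p.2) (1 - u - v)⁻¹ := by
  refine HasSum.of_sum_antidiagonal ?_ ?_
  · refine (summable_geometric_of_lt_one (by positivity) h).of_nonneg_of_le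
      (fun n => sum_nonneg fun _ _ => norm_nonneg _) fun n => ?_
    rw [← sum_antidiagonal_choose_mul_pow_mul_pow]
    refine sum_le_sum fun p _ => ?_
    rw [norm_mul, norm_mul, norm_pow, norm_pow]
    gcongr
    simpa using Nat.norm_cast_le (α := 𝕜) _
  · simp only [sum_antidiagonal_choose_mul_pow_mul_pow, sub_sub]
    exact hasSum_geometric_of_norm_lt_one ((norm_add_le u v).trans_lt h)

theorem hasSum_even_even_of_sign_changes {K : Type*} [Field K] [CharZero K] [TopologicalSpace K]
    [IsTopologicalRing K] {c : ℕ × ℕ → K} {u v A B C D : K}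
    (hA : HasSum (fun p => c p * u ^ p.1 * v ^ p.2) A)
    (hB : HasSum (fun p => c p * u ^ p.1 * (-v) ^ p.2) B)
    (hC : HasSum (fun p => c p * (-u) ^ p.1 * v ^ p.2) C)
    (hD : HasSum (fun p => c p * (-u) ^ p.1 * (-v) ^ p.2) D) :
    HasSum (fun mn : ℕ × ℕ => c (2 * mn.1, 2 * mn.2) * (u ^ 2) ^ mn.1 * (v ^ 2) ^ mn.2)
      ((A + B + C + D) / 4) := by
  have hsum := (((hA.add hB).add hC).add hD).div_const 4
  have hterm : ∀ p : ℕ × ℕ,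
      (c p * u ^ p.1 * v ^ p.2 + c p * u ^ p.1 * (-v) ^ p.2 + c p * (-u) ^ p.1 * v ^ p.2
        + c p * (-u) ^ p.1 * (-v) ^ p.2) / 4
      = c p * u ^ p.1 * v ^ p.2 * ((1 + (-1) ^ p.1) * (1 + (-1) ^ p.2) / 4) := by
    intro p
    rw [neg_pow u, neg_pow v]
    ring
  simp only [hterm] at hsum
  have hdouble : Function.Injective fun mn : ℕ × ℕ => (2 * mn.1, 2 * mn.2) := by
    rintro ⟨i, j⟩ ⟨k, l⟩ h
    simp only [Prod.mk.injEq] at h ⊢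
    omega
  rw [← hdouble.hasSum_iff] at hsum
  · convert hsum using 2 with mn
    norm_num [pow_mul]
  · rintro ⟨i, j⟩ hij
    rcases Nat.even_or_odd i with ⟨m, rfl⟩ | hi
    · rcases Nat.even_or_odd j with ⟨n, rfl⟩ | hj
      · exact absurd ⟨(m, n), by simp [two_mul]⟩ hij
      · simp [hj.neg_one_pow]
    · simp [hi.neg_one_pow]

theorem sum_sign_changes_inv_one_sub_sub {K : Type*} [Field K] {a b : K}
    (h₁ : 1 - a - b ≠ 0) (h₂ : 1 - a - -b ≠ 0) (h₃ : 1 - -a - b ≠ 0) (h₄ : 1 - -a - -b ≠ 0) :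
    (1 - a - b)⁻¹ + (1 - a - -b)⁻¹ + (1 - -a - b)⁻¹ + (1 - -a - -b)⁻¹
      = 4 * (1 - a ^ 2 - b ^ 2) /
        (1 - 2 * a ^ 2 - 2 * b ^ 2 - 2 * a ^ 2 * b ^ 2 + (a ^ 2) ^ 2 + (b ^ 2) ^ 2) := by
  have hden : 1 - 2 * a ^ 2 - 2 * b ^ 2 - 2 * a ^ 2 * b ^ 2 + (a ^ 2) ^ 2 + (b ^ 2) ^ 2
      = (1 - a - b) * (1 - a - -b) * (1 - -a - b) * (1 - -a - -b) := by ring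
  rw [hden]
  field_simp
  ring

theorem hasSum_choose_even_even {𝕜 : Type*} [NormedField 𝕜] [CharZero 𝕜] [CompleteSpace 𝕜]
    {a b : 𝕜} (h : ‖a‖ + ‖b‖ < 1) :
    HasSum (fun mn : ℕ × ℕ => ((2 * mn.1 + 2 * mn.2).choose (2 * mn.1) : 𝕜) *
        (a ^ 2) ^ mn.1 * (b ^ 2) ^ mn.2)
      ((1 - a ^ 2 - b ^ 2) /
        (1 - 2 * a ^ 2 - 2 * b ^ 2 - 2 * a ^ 2 * b ^ 2 + (a ^ 2) ^ 2 + (b ^ 2) ^ 2)) := by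
  have hne : ∀ u v : 𝕜, ‖u‖ + ‖v‖ < 1 → 1 - u - v ≠ 0 := by
    intro u v huv
    rw [sub_sub, sub_ne_zero]
    rintro hone
    simpa [← hone] using (norm_add_le u v).trans_lt huv
  have h₂ : ‖a‖ + ‖-b‖ < 1 := by rwa [norm_neg]
  have h₃ : ‖-a‖ + ‖b‖ < 1 := by rwa [norm_neg]
  have h₄ : ‖-a‖ + ‖-b‖ < 1 := by rwa [norm_neg, norm_neg]
  have hsum := hasSum_even_even_of_sign_changes (hasSum_choose_mul_pow_mul_pow h)
    (hasSum_choose_mul_pow_mul_pow h₂) (hasSum_choose_mul_pow_mul_pow h₃)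
    (hasSum_choose_mul_pow_mul_pow h₄)
  rwa [sum_sign_changes_inv_one_sub_sub (hne _ _ h) (hne _ _ h₂) (hne _ _ h₃) (hne _ _ h₄),
    mul_div_assoc, mul_div_cancel_left₀ _ (by norm_num : (4 : 𝕜) ≠ 0)] at hsum

theorem even_binom_series_rational :
    ∃ ε > (0 : ℝ), ∀ x y : ℂ, ‖x‖ < ε → ‖y‖ < ε →
      HasSum (fun mn : ℕ × ℕ =>
          (((2 * mn.1 + 2 * mn.2)! : ℂ) / ((2 * mn.1)! * (2 * mn.2)!)) *
            x ^ mn.1 * y ^ mn.2)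
        ((1 - x - y) / (1 - 2 * x - 2 * y - 2 * x * y + x ^ 2 + y ^ 2)) := by
  refine ⟨1 / 4, by norm_num, fun x y hx hy => ?_⟩
  obtain ⟨a, rfl⟩ := IsAlgClosed.exists_pow_nat_eq x two_pos
  obtain ⟨b, rfl⟩ := IsAlgClosed.exists_pow_nat_eq y two_pos
  have hab : ‖a‖ + ‖b‖ < 1 := by
    rw [norm_pow] at hx hy
    have ha : ‖a‖ < 1 / 2 := by nlinarith [norm_nonneg a]
    have hb : ‖b‖ < 1 / 2 := by nlinarith [norm_nonneg b]
    linarith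
  simpa only [Nat.cast_add_choose] using hasSum_choose_even_even hab
end

section
/- If a formal power series ∑_{m,n≥0} a(m,n) x^{r₁ m} y^{r₂ n} (supported only on exponents divisible by r₁ in x and r₂ in y) equals a rational function f(x,y) = A(x,y)/B(x,y) with A, B coprime polynomials and B(0,0) ≠ 0, then A(ζ₁x, ζ₂y) = A(x,y) and B(ζ₁x, ζ₂y) = B(x,y) for all r₁-th roots of unity ζ₁ and r₂-th roots of unity ζ₂; consequently the series ∑_{m,n≥0} a(m,n) x^m y^n is also a rational function. -/
/-!
Roots of unity have modulus one, so the hypothesis makes `A / B` invariant under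
`(x, y) ↦ (ζ₁ x, ζ₂ y)` near the origin, and by the identity principle
`A · B(ζ₁x, ζ₂y) = A(ζ₁x, ζ₂y) · B`. Coprimality then gives `B(ζ₁x, ζ₂y) = u · B` and
`A(ζ₁x, ζ₂y) = u · A` for a unit `u`, a nonzero constant, and evaluating at the origin
(where `B ≠ 0`) gives `u = 1`. Invariance under all these substitutions forces every exponent of
`x` (resp. `y`) occurring in `A` and `B` to be divisible by `r₁` (resp. `r₂`), so dividing the
exponents yields polynomials `P`, `Q` with `A(x, y) = P(x^r₁, y^r₂)`, `B(x, y) = Q(x^r₁, y^r₂)`,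
and `P / Q` is the sum of `∑ a(m, n) x^m y^n`.
-/

/-- A bivariate sequence of coefficients is the Taylor series of a rational function
(with denominator non-vanishing at the origin). -/
def IsRationalBivariateSeries (a : ℕ → ℕ → ℂ) : Prop :=
  ∃ p q : MvPolynomial (Fin 2) ℂ, MvPolynomial.eval (fun _ => (0 : ℂ)) q ≠ 0 ∧
    ∃ ε > (0 : ℝ), ∀ x y : ℂ, ‖x‖ < ε → ‖y‖ < ε →
      HasSum (fun mn : ℕ × ℕ => a mn.1 mn.2 * x ^ mn.1 * y ^ mn.2)
        (MvPolynomial.eval ![x, y] p / MvPolynomial.eval ![x, y] q)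

open Filter Topology MvPolynomial

theorem IsCoprime.exists_unit_of_mul_eq_mul {R : Type*} [CommRing R] [IsDomain R] {a b a' b' : R}
    (h : IsCoprime a b) (h' : IsCoprime a' b') (hb : b ≠ 0) (heq : a * b' = a' * b) :
    ∃ u : Rˣ, a' = a * u ∧ b' = b * u := by
  have hbb' : b ∣ b' := h.symm.dvd_of_dvd_mul_left ⟨a', by rw [heq, mul_comm]⟩
  have hb'b : b' ∣ b := h'.symm.dvd_of_dvd_mul_left ⟨a, by rw [← heq, mul_comm]⟩
  obtain ⟨u, hu⟩ := associated_of_dvd_dvd hbb' hb'b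
  refine ⟨u, mul_right_cancel₀ hb ?_, hu.symm⟩
  rw [← heq, ← hu]
  ring

namespace MvPolynomial

variable {σ R : Type*}

section CommSemiring

variable [CommSemiring R]

noncomputable def scale (c : σ → R) : MvPolynomial σ R →ₐ[R] MvPolynomial σ R :=
  bind₁ fun i => C (c i) * X i

theorem eval_scale (c v : σ → R) (p : MvPolynomial σ R) :
    eval v (scale c p) = eval (c * v) p := by
  simp only [scale, eval, eval₂Hom_bind₁]
  congr 2
  funext i
  simp

theorem scale_monomial (c : σ → R) (d : σ →₀ ℕ) (a : R) :
    scale c (monomial d a) = monomial d (a * d.prod fun i k => c i ^ k) := by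
  rw [scale, bind₁_monomial, monomial_eq, C_mul, Finsupp.prod, Finsupp.prod, map_prod]
  simp only [mul_pow, Finset.prod_mul_distrib, C_pow]
  ring

theorem coeff_scale (c : σ → R) (p : MvPolynomial σ R) (d : σ →₀ ℕ) :
    coeff d (scale c p) = (d.prod fun i k => c i ^ k) * coeff d p := by
  classical
  induction p using MvPolynomial.induction_on' with
  | monomial d' a =>
    rw [scale_monomial, coeff_monomial, coeff_monomial]
    split_ifs with h
    · rw [h, mul_comm]
    · rw [mul_zero]
  | add p q hp hq => simp only [map_add, coeff_add, hp, hq, mul_add]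

/-- Exponents are divided with truncating `ℕ`-division, so this is only meaningful when every
exponent of `X i` in `p` is a multiple of `r i`. -/
noncomputable def contract [Finite σ] (r : σ → ℕ) (p : MvPolynomial σ R) :
    MvPolynomial σ R :=
  ∑ d ∈ p.support, monomial (Finsupp.equivFunOnFinite.symm fun i => d i / r i) (coeff d p)

theorem eval_contract [Fintype σ] {r : σ → ℕ} {p : MvPolynomial σ R}
    (hp : ∀ d ∈ p.support, ∀ i, r i ∣ d i) (v : σ → R) :
    eval (fun i => v i ^ r i) (contract r p) = eval v p := by
  rw [contract, map_sum, eval_eq']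
  refine Finset.sum_congr rfl fun d hd => ?_
  rw [eval_monomial, Finsupp.prod_fintype _ _ fun _ => pow_zero _]
  congr 1
  refine Finset.prod_congr rfl fun i _ => ?_
  rw [Finsupp.coe_equivFunOnFinite_symm, ← pow_mul, Nat.mul_div_cancel' (hp d hd i)]

end CommSemiring

theorem eq_of_eventually_eval_eq {𝕜 : Type*} [RCLike 𝕜] [Fintype σ] {p q : MvPolynomial σ 𝕜}
    {x : σ → 𝕜}
    (h : ∀ᶠ v in 𝓝 x, eval v p = eval v q) : p = q :=
  funext <| congrFun <|
    (AnalyticOnNhd.eval_mvPolynomial p).eq_of_eventuallyEq (AnalyticOnNhd.eval_mvPolynomial q) h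

theorem dvd_exponents_of_scale_eq_self [Fintype σ] {r : σ → ℕ} (hr : ∀ i, r i ≠ 0)
    {p : MvPolynomial σ ℂ} (hp : ∀ c : σ → ℂ, (∀ i, c i ^ r i = 1) → scale c p = p) :
    ∀ d ∈ p.support, ∀ i, r i ∣ d i := by
  classical
  intro d hd i
  have hζ := Complex.isPrimitiveRoot_exp (r i) (hr i)
  set ζ := Complex.exp (2 * Real.pi * Complex.I / r i)
  have hc : ∀ j, (Pi.mulSingle i ζ : σ → ℂ) j ^ r j = 1 := by
    intro j
    by_cases hj : j = i
    · subst hj; simpa using hζ.pow_eq_one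
    · simp [hj]
  have hcoeff := coeff_scale (Pi.mulSingle i ζ) p d
  rw [hp _ hc, Finsupp.prod_fintype _ _ fun _ => pow_zero _,
    Fintype.prod_eq_single i fun j hj => by simp [hj]] at hcoeff
  refine hζ.dvd_of_pow_eq_one _ ?_
  simpa [mem_support_iff.mp hd] using hcoeff.symm

theorem scale_eq_self_of_eventually_div_eq [Fintype σ] {A B : MvPolynomial σ ℂ} {c : σ → ℂ}
    (hcop : IsCoprime A B) (hB0 : eval 0 B ≠ 0)
    (h : ∀ᶠ v in 𝓝 0, eval (c * v) A / eval (c * v) B = eval v A / eval v B) :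
    scale c A = A ∧ scale c B = B := by
  have hsB0 : eval 0 (scale c B) = eval 0 B := by rw [eval_scale, mul_zero]
  have hcross : A * scale c B = scale c A * B := by
    refine eq_of_eventually_eval_eq (x := 0) ?_
    filter_upwards [h, (continuous_eval B).continuousAt.eventually_ne hB0,
      (continuous_eval (scale c B)).continuousAt.eventually_ne (hsB0 ▸ hB0)] with v hv hB hsB
    rw [← eval_scale, ← eval_scale, div_eq_div_iff hsB hB] at hv
    simp only [map_mul, hv]
  obtain ⟨u, hA, hB⟩ : ∃ u : (MvPolynomial σ ℂ)ˣ, scale c A = A * u ∧ scale c B = B * u :=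
    hcop.exists_unit_of_mul_eq_mul (hcop.map (scale c).toRingHom)
    (fun h0 => hB0 (by rw [h0, map_zero])) hcross
  obtain ⟨k, -, hk⟩ := (isUnit_iff_eq_C_of_isReduced).mp u.isUnit
  have hk1 : k = 1 := by
    rw [hB, map_mul, hk, eval_C] at hsB0
    exact mul_left_cancel₀ hB0 (hsB0.trans (mul_one _).symm)
  simp only [hA, hB, hk, hk1, map_one, mul_one, and_self]

end MvPolynomial

theorem Complex.exists_pow_eq_and_norm_lt {r : ℕ} (hr : r ≠ 0) {ε : ℝ} (hε : 0 ≤ ε) {u : ℂ}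
    (hu : ‖u‖ < ε ^ r) : ∃ x : ℂ, x ^ r = u ∧ ‖x‖ < ε := by
  obtain ⟨x, rfl⟩ := IsAlgClosed.exists_pow_nat_eq u (Nat.pos_of_ne_zero hr)
  exact ⟨x, rfl, lt_of_pow_lt_pow_left₀ r hε (by rwa [← norm_pow])⟩

section Bivariate

variable {a : ℕ → ℕ → ℂ} {r₁ r₂ : ℕ} {ε : ℝ} {f : ℂ → ℂ → ℂ}

theorem apply_mul_eq_of_hasSum_pow (hr₁ : r₁ ≠ 0) (hr₂ : r₂ ≠ 0)
    (hsum : ∀ x y : ℂ, ‖x‖ < ε → ‖y‖ < ε →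
      HasSum (fun mn : ℕ × ℕ => a mn.1 mn.2 * x ^ (r₁ * mn.1) * y ^ (r₂ * mn.2)) (f x y))
    {ζ₁ ζ₂ : ℂ} (h₁ : ζ₁ ^ r₁ = 1) (h₂ : ζ₂ ^ r₂ = 1) {x y : ℂ} (hx : ‖x‖ < ε) (hy : ‖y‖ < ε) :
    f (ζ₁ * x) (ζ₂ * y) = f x y := by
  have hζx : ‖ζ₁ * x‖ < ε := by rwa [norm_mul, Complex.norm_eq_one_of_pow_eq_one h₁ hr₁, one_mul]
  have hζy : ‖ζ₂ * y‖ < ε := by rwa [norm_mul, Complex.norm_eq_one_of_pow_eq_one h₂ hr₂, one_mul]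
  refine (hsum _ _ hζx hζy).unique ?_
  simpa only [mul_pow, pow_mul, h₁, h₂, one_pow, one_mul] using hsum x y hx hy

theorem hasSum_of_hasSum_pow (hr₁ : r₁ ≠ 0) (hr₂ : r₂ ≠ 0) (hε : 0 ≤ ε)
    (hsum : ∀ x y : ℂ, ‖x‖ < ε → ‖y‖ < ε →
      HasSum (fun mn : ℕ × ℕ => a mn.1 mn.2 * x ^ (r₁ * mn.1) * y ^ (r₂ * mn.2)) (f x y))
    {g : ℂ → ℂ → ℂ} (hfg : ∀ x y, f x y = g (x ^ r₁) (y ^ r₂)) (u v : ℂ)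
    (hu : ‖u‖ < min (ε ^ r₁) (ε ^ r₂)) (hv : ‖v‖ < min (ε ^ r₁) (ε ^ r₂)) :
    HasSum (fun mn : ℕ × ℕ => a mn.1 mn.2 * u ^ mn.1 * v ^ mn.2) (g u v) := by
  obtain ⟨x, rfl, hx⟩ := Complex.exists_pow_eq_and_norm_lt hr₁ hε (hu.trans_le (min_le_left _ _))
  obtain ⟨y, rfl, hy⟩ := Complex.exists_pow_eq_and_norm_lt hr₂ hε (hv.trans_le (min_le_right _ _))
  simpa only [pow_mul, hfg] using hsum x y hx hy

theorem eventually_nhds_zero_of_forall_norm_lt {P : (Fin 2 → ℂ) → Prop} (hε : 0 < ε)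
    (h : ∀ x y : ℂ, ‖x‖ < ε → ‖y‖ < ε → P ![x, y]) : ∀ᶠ v in 𝓝 0, P v := by
  filter_upwards [Metric.ball_mem_nhds (0 : Fin 2 → ℂ) hε] with v hv
  have hvε : ∀ i, ‖v i‖ < ε := fun i => (norm_le_pi_norm v i).trans_lt (mem_ball_zero_iff.mp hv)
  have hv2 : ![v 0, v 1] = v := by funext i; fin_cases i <;> rfl
  simpa only [hv2] using h (v 0) (v 1) (hvε 0) (hvε 1)

end Bivariate

theorem sublattice_supported_rational_series
    (a : ℕ → ℕ → ℂ) (r₁ r₂ : ℕ) (hr₁ : 0 < r₁) (hr₂ : 0 < r₂)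
    (A B : MvPolynomial (Fin 2) ℂ) (hcop : IsCoprime A B)
    (hB0 : MvPolynomial.eval (fun _ => (0 : ℂ)) B ≠ 0)
    (ε : ℝ) (hε : 0 < ε)
    (hsum : ∀ x y : ℂ, ‖x‖ < ε → ‖y‖ < ε →
      HasSum (fun mn : ℕ × ℕ => a mn.1 mn.2 * x ^ (r₁ * mn.1) * y ^ (r₂ * mn.2))
        (MvPolynomial.eval ![x, y] A / MvPolynomial.eval ![x, y] B)) :
    (∀ ζ₁ ζ₂ : ℂ, ζ₁ ^ r₁ = 1 → ζ₂ ^ r₂ = 1 →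
        MvPolynomial.bind₁ (fun i => MvPolynomial.C (![ζ₁, ζ₂] i) * MvPolynomial.X i) A = A ∧
        MvPolynomial.bind₁ (fun i => MvPolynomial.C (![ζ₁, ζ₂] i) * MvPolynomial.X i) B = B) ∧
      IsRationalBivariateSeries a := by
  set r : Fin 2 → ℕ := ![r₁, r₂]
  have hr : ∀ i, r i ≠ 0 := Fin.forall_fin_two.2 ⟨hr₁.ne', hr₂.ne'⟩
  have hinv (ζ₁ ζ₂ : ℂ) (h₁ : ζ₁ ^ r₁ = 1) (h₂ : ζ₂ ^ r₂ = 1) :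
      scale ![ζ₁, ζ₂] A = A ∧ scale ![ζ₁, ζ₂] B = B := by
    refine scale_eq_self_of_eventually_div_eq hcop hB0 <|
      eventually_nhds_zero_of_forall_norm_lt hε fun x y hx hy => ?_
    have hmul : ![ζ₁, ζ₂] * ![x, y] = ![ζ₁ * x, ζ₂ * y] := by funext i; fin_cases i <;> rfl
    rw [hmul]
    exact apply_mul_eq_of_hasSum_pow (f := fun x y => eval ![x, y] A / eval ![x, y] B)
      hr₁.ne' hr₂.ne' hsum h₁ h₂ hx hy
  have hinv_pi (c : Fin 2 → ℂ) (hc : ∀ i, c i ^ r i = 1) : scale c A = A ∧ scale c B = B := by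
    have hc2 : ![c 0, c 1] = c := by funext i; fin_cases i <;> rfl
    simpa only [hc2] using hinv (c 0) (c 1) (hc 0) (hc 1)
  have hAr := dvd_exponents_of_scale_eq_self hr fun c hc => (hinv_pi c hc).1
  have hBr := dvd_exponents_of_scale_eq_self hr fun c hc => (hinv_pi c hc).2
  have hpow (x y : ℂ) : ![x ^ r₁, y ^ r₂] = fun i => ![x, y] i ^ r i := by
    funext i; fin_cases i <;> rfl
  refine ⟨hinv, contract r A, contract r B, ?_, _, by positivity,
    hasSum_of_hasSum_pow hr₁.ne' hr₂.ne' hε.le hsum fun x y => ?_⟩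
  · have h0 : (fun _ => (0 : ℂ)) = fun i => (0 : Fin 2 → ℂ) i ^ r i :=
      funext fun i => (zero_pow (hr i)).symm
    rwa [h0, eval_contract hBr]
  · rw [hpow, eval_contract hAr, eval_contract hBr]
end

section
/- Let p₁,…,p_r, q₁,…,q_s be positive integers with ∑p_i = ∑q_j and set A_n = (∏_{i}(p_i n)!)/(∏_{j}(q_j n)!). Then A_n is an integer for all n ≥ 0 if and only if the Landau function L(x) = ∑{q_j x} − ∑{p_i x} satisfies L(x) ≥ 0 for all x ∈ ℝ. -/
/-!
Writing `L(x) = ∑ {q_j x} - ∑ {p_i x}`, the balance condition turns `L(x)` into the integer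
`∑ ⌊p_i x⌋ - ∑ ⌊q_j x⌋`, while Legendre's formula gives
`v_l(A_n) = ∑_{ν ≥ 1} (∑ ⌊p_i n / l^ν⌋ - ∑ ⌊q_j n / l^ν⌋)` for every prime `l`.
So `L ≥ 0` makes every term nonnegative. Conversely, `L` has period `1` and is constant on a right
neighbourhood of each point; for `0 ≤ y < 1`, a large prime `l` and `n = ⌈l y⌉`, only the term
`ν = 1` survives and it equals `L(n / l) = L(y)`, so `L(y) < 0` forces `l ∤ A_n`.
-/

open Finset Filter Topology
open scoped Nat

lemma fract_natCast_mul_fract {R : Type*} [Ring R] [LinearOrder R] [IsStrictOrderedRing R]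
    [FloorRing R] (m : ℕ) (x : R) : Int.fract (m * Int.fract x) = Int.fract (m * x) := by
  conv_rhs => rw [← Int.floor_add_fract x, mul_add, add_comm]
  exact_mod_cast (Int.fract_add_intCast _ (m * ⌊x⌋)).symm

lemma Int.floor_natCast_div_natCast {k : Type*} [Field k] [LinearOrder k] [IsOrderedRing k]
    [FloorRing k] (a b : ℕ) : ⌊(a : k) / b⌋ = ((a / b : ℕ) : ℤ) := by
  rw [Int.floor_div_natCast, Int.floor_natCast, Int.natCast_div]

section

variable {ι κ : Type*} [Fintype ι] [Fintype κ]

lemma sum_fract_sub_sum_fract_nonneg_iff (p : ι → ℕ) (q : κ → ℕ) (hbal : ∑ i, p i = ∑ j, q j)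
    (x : ℝ) :
    0 ≤ ∑ j, Int.fract ((q j : ℝ) * x) - ∑ i, Int.fract ((p i : ℝ) * x) ↔
      ∑ j, ⌊(q j : ℝ) * x⌋ ≤ ∑ i, ⌊(p i : ℝ) * x⌋ := by
  have hsum : ∑ i, (p i : ℝ) * x = ∑ j, (q j : ℝ) * x := by
    rw [← sum_mul, ← sum_mul]
    exact_mod_cast congrArg (fun m : ℕ => (m : ℝ) * x) hbal
  simp only [Int.fract, sum_sub_distrib, ← Int.cast_le (R := ℝ), Int.cast_sum]
  constructor <;> intro h <;> linarith

lemma factorization_prod_factorial {l b : ℕ} (hl : l.Prime) (a : ι → ℕ)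
    (hb : ∀ i, Nat.log l (a i) < b) :
    (∏ i, (a i)!).factorization l = ∑ ν ∈ Ico 1 b, ∑ i, a i / l ^ ν := by
  rw [Nat.factorization_prod fun i _ => Nat.factorial_ne_zero _, Finset.sum_apply', sum_comm]
  exact sum_congr rfl fun i _ => Nat.factorization_factorial hl (hb i)

lemma prod_factorial_dvd_prod_factorial (a : ι → ℕ) (c : κ → ℕ)
    (h : ∀ d, ∑ j, c j / d ≤ ∑ i, a i / d) : (∏ j, (c j)!) ∣ ∏ i, (a i)! := by
  rw [← Nat.factorization_prime_le_iff_dvd (prod_ne_zero_iff.2 fun j _ => Nat.factorial_ne_zero _)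
    (prod_ne_zero_iff.2 fun i _ => Nat.factorial_ne_zero _)]
  intro l hl
  obtain ⟨b, hb⟩ := Finite.exists_le (Sum.elim a c)
  have hlog (m : ℕ) (hm : m ≤ b) : Nat.log l m < b + 1 :=
    Nat.lt_succ_of_le ((Nat.log_le_self l m).trans hm)
  rw [factorization_prod_factorial hl a fun i => hlog _ (hb (.inl i)),
    factorization_prod_factorial hl c fun j => hlog _ (hb (.inr j))]
  exact sum_le_sum fun ν _ => h (l ^ ν)

-- `⌊m z⌋` is constant on a right neighbourhood of `y`, and `⌈y l⌉ / l` tends to `y` from the right.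
lemma eventually_mul_ceil_div_eq_floor (m : ℕ) {y : ℝ} (hy : 0 ≤ y) :
    ∀ᶠ l : ℕ in atTop, ((m * ⌈y * l⌉₊ / l : ℕ) : ℤ) = ⌊(m : ℝ) * y⌋ := by
  have hlim : Tendsto (fun l : ℕ => (m : ℝ) * ((⌈y * l⌉₊ : ℝ) / l)) atTop (𝓝[≥] (m * y)) := by
    refine tendsto_nhdsWithin_iff.2 ⟨((tendsto_nat_ceil_mul_div_atTop hy).comp
      tendsto_natCast_atTop_atTop).const_mul _, ?_⟩
    filter_upwards [eventually_gt_atTop 0] with l hl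
    exact mul_le_mul_of_nonneg_left
      ((le_div_iff₀ (Nat.cast_pos.2 hl : (0 : ℝ) < l)).2 (Nat.le_ceil _)) m.cast_nonneg
  filter_upwards [tendsto_pure.1 ((tendsto_floor_right_pure_floor _).comp hlim)] with l hl
  rw [← Int.floor_natCast_div_natCast (k := ℝ), ← hl, Function.comp_apply, Nat.cast_mul,
    mul_div_assoc]

lemma eventually_factorization_prod_factorial_eq_sum_floor (a : ι → ℕ) {y : ℝ} (hy0 : 0 ≤ y)
    (hy1 : y ≤ 1) :
    ∀ᶠ l : ℕ in atTop, l.Prime →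
      ((∏ i, (a i * ⌈y * l⌉₊)!).factorization l : ℤ) = ∑ i, ⌊(a i : ℝ) * y⌋ := by
  filter_upwards [eventually_all.2 fun i => eventually_mul_ceil_div_eq_floor (a i) hy0,
    eventually_gt_atTop (∑ i, a i)] with l hfloor hl hprime
  have hn : ⌈y * l⌉₊ ≤ l := Nat.ceil_le.2 (by nlinarith [(l.cast_nonneg : (0 : ℝ) ≤ l)])
  have hsq (i : ι) : a i * ⌈y * l⌉₊ < l ^ 2 := by
    have hai : a i < l := (single_le_sum (fun i _ => Nat.zero_le (a i)) (mem_univ i)).trans_lt hl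
    calc a i * ⌈y * l⌉₊ ≤ a i * l := Nat.mul_le_mul_left _ hn
      _ < l * l := Nat.mul_lt_mul_of_pos_right hai (by omega)
      _ = l ^ 2 := (sq l).symm
  rw [factorization_prod_factorial hprime _ fun i => Nat.log_lt_of_lt_pow' two_ne_zero (hsq i)]
  simp only [Nat.Ico_succ_singleton, sum_singleton, pow_one, Nat.cast_sum, hfloor]

lemma sum_floor_le_of_prod_factorial_dvd (p : ι → ℕ) (q : κ → ℕ)
    (h : ∀ n : ℕ, (∏ j, (q j * n)!) ∣ ∏ i, (p i * n)!) {y : ℝ} (hy0 : 0 ≤ y) (hy1 : y ≤ 1) :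
    ∑ j, ⌊(q j : ℝ) * y⌋ ≤ ∑ i, ⌊(p i : ℝ) * y⌋ := by
  have hprimes : ∃ᶠ l : ℕ in atTop, l.Prime :=
    Nat.frequently_atTop_iff_infinite.2 Nat.infinite_setOfPred_prime
  obtain ⟨l, hl, hp, hq⟩ := (hprimes.and_eventually
    ((eventually_factorization_prod_factorial_eq_sum_floor p hy0 hy1).and
      (eventually_factorization_prod_factorial_eq_sum_floor q hy0 hy1))).exists
  rw [← hp hl, ← hq hl, Nat.cast_le]
  exact (Nat.factorization_le_iff_dvd (prod_ne_zero_iff.2 fun j _ => Nat.factorial_ne_zero _)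
    (prod_ne_zero_iff.2 fun i _ => Nat.factorial_ne_zero _)).2 (h _) l

end

theorem landau_criterion_general
    (r s : ℕ) (p : Fin r → ℕ) (q : Fin s → ℕ)
    (hbal : ∑ i, p i = ∑ j, q j) :
    (∀ n : ℕ, (∏ j, (q j * n)!) ∣ ∏ i, (p i * n)!) ↔
      ∀ x : ℝ, 0 ≤ ∑ j, Int.fract ((q j : ℝ) * x) - ∑ i, Int.fract ((p i : ℝ) * x) := by
  constructor
  · intro hdvd x
    have h := (sum_fract_sub_sum_fract_nonneg_iff p q hbal (Int.fract x)).2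
      (sum_floor_le_of_prod_factorial_dvd p q hdvd (Int.fract_nonneg x) (Int.fract_lt_one x).le)
    simpa only [fract_natCast_mul_fract] using h
  · intro hL n
    refine prod_factorial_dvd_prod_factorial _ _ fun d => ?_
    have h := (sum_fract_sub_sum_fract_nonneg_iff p q hbal ((n : ℝ) / d)).1 (hL _)
    simp only [← mul_div_assoc, ← Nat.cast_mul, Int.floor_natCast_div_natCast] at h
    exact_mod_cast h

theorem landau_criterion
    (r s : ℕ) (p : Fin r → ℕ) (q : Fin s → ℕ)
    (hp : ∀ i, 0 < p i) (hq : ∀ j, 0 < q j)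
    (hbal : ∑ i, p i = ∑ j, q j) :
    (∀ n : ℕ, (∏ j, (q j * n)!) ∣ ∏ i, (p i * n)!) ↔
      ∀ x : ℝ, 0 ≤ ∑ j, Int.fract ((q j : ℝ) * x) - ∑ i, Int.fract ((p i : ℝ) * x) :=
  landau_criterion_general r s p q hbal
end

section
/- For coprime positive integers a and b, the factorial ratio (2(a+b)n)! (bn)! / ( ((a+b)n)! (2bn)! (an)! ) is an integer for every n ≥ 0. -/
/-!
By Legendre's formula, with `x = a n` and `y = b n`, it suffices to compare, for every prime
power `d = p ^ i`, the floors `⌊(x + y)/d⌋ + ⌊2y/d⌋ + ⌊x/d⌋ ≤ ⌊2(x + y)/d⌋ + ⌊y/d⌋`.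
Writing `r, s` for the residues of `x, y`, this reduces to
`[d ≤ 2s] ≤ [d ≤ r + s] + [d ≤ 2((x + y) mod d)]`, which holds because when `r + s < d`
the residue of `x + y` is `r + s ≥ s`.
-/

open scoped Nat

namespace Nat

theorem add_div_add_two_mul_div_add_div_le (x y d : ℕ) :
    (x + y) / d + 2 * y / d + x / d ≤ 2 * (x + y) / d + y / d := by
  rcases eq_zero_or_pos d with rfl | hd
  · simp
  have hmod : ¬ d ≤ x % d + y % d → (x + y) % d = x % d + y % d := fun h =>
    add_mod_of_add_mod_lt (by omega)
  rw [two_mul, two_mul, Nat.add_div (a := x + y) hd, Nat.add_div (a := y) hd,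
    Nat.add_div (a := x) hd]
  split_ifs <;> omega

theorem factorization_factorial_add_two_mul_le (x y p : ℕ) (hp : p.Prime) :
    ((x + y)! * (2 * y)! * x !).factorization p ≤ ((2 * (x + y))! * y !).factorization p := by
  have := Fact.mk hp
  simp only [factorization_mul, factorial_ne_zero, mul_ne_zero_iff, ne_eq, not_false_eq_true,
    and_self, Finsupp.add_apply, factorization_def _ hp]
  have hlog {m : ℕ} (hm : m ≤ 2 * (x + y)) : log p m < log p (2 * (x + y)) + 1 :=
    lt_succ_of_le (log_mono_right hm)
  rw [padicValNat_factorial (hlog (by omega)), padicValNat_factorial (hlog (by omega)),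
    padicValNat_factorial (hlog (by omega)), padicValNat_factorial (hlog le_rfl),
    padicValNat_factorial (hlog (by omega)), ← Finset.sum_add_distrib, ← Finset.sum_add_distrib,
    ← Finset.sum_add_distrib]
  exact Finset.sum_le_sum fun i _ => add_div_add_two_mul_div_add_div_le x y (p ^ i)

theorem factorial_add_mul_factorial_two_mul_mul_factorial_dvd (x y : ℕ) :
    (x + y)! * (2 * y)! * x ! ∣ (2 * (x + y))! * y ! :=
  (factorization_prime_le_iff_dvd (by positivity) (by positivity)).mp
    (factorization_factorial_add_two_mul_le x y)

end Nat

theorem factorial_ratio_family_two_integral_general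
    (a b : ℕ) (n : ℕ) :
    ((a + b) * n)! * (2 * b * n)! * (a * n)! ∣ (2 * (a + b) * n)! * (b * n)! := by
  simpa only [add_mul, mul_assoc] using
    Nat.factorial_add_mul_factorial_two_mul_mul_factorial_dvd (a * n) (b * n)

theorem factorial_ratio_family_two_integral
    (a b : ℕ) (ha : 0 < a) (hb : 0 < b) (hab : Nat.Coprime a b) (n : ℕ) :
    ((a + b) * n)! * (2 * b * n)! * (a * n)! ∣ (2 * (a + b) * n)! * (b * n)! :=
  factorial_ratio_family_two_integral_general a b n
end

section
/- For coprime positive integers a and b, the factorial ratio (2an)!(2bn)! / ( (an)!(bn)!((a+b)n)! ) is an integer for every n ≥ 0. -/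
/-!
By Legendre's formula the exponent of a prime `p` in `N!` is `∑ᵢ ⌊N / pⁱ⌋`, so it suffices to show
`⌊x/m⌋ + ⌊y/m⌋ + ⌊(x+y)/m⌋ ≤ ⌊2x/m⌋ + ⌊2y/m⌋` for every modulus `m = pⁱ`. This holds because
`⌊(x+y)/m⌋` exceeds `⌊x/m⌋ + ⌊y/m⌋` only when the remainders of `x` and `y` add up to at least `m`;
then one of them is at least `m/2`, and doubling that number carries one more unit.
Taking `x = an`, `y = bn` gives the theorem (the super Catalan numbers for `a = b = 1`).
-/

open Finset
open scoped Nat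

namespace Nat

theorem div_add_div_add_add_div_le (x y m : ℕ) :
    x / m + y / m + (x + y) / m ≤ 2 * x / m + 2 * y / m := by
  rcases Nat.eq_zero_or_pos m with rfl | hm
  · simp
  have hxy := Nat.add_div (a := x) (b := y) hm
  have hxx := Nat.add_div (a := x) (b := x) hm
  have hyy := Nat.add_div (a := y) (b := y) hm
  have hx := Nat.mod_lt x hm
  have hy := Nat.mod_lt y hm
  rw [two_mul, two_mul, hxy, hxx, hyy]
  split_ifs <;> omega

theorem factorial_mul_factorial_mul_factorial_add_dvd (x y : ℕ) :
    x ! * y ! * (x + y)! ∣ (2 * x)! * (2 * y)! := by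
  rw [← factorization_prime_le_iff_dvd (by positivity) (by positivity)]
  intro p hp
  have legendre (N : ℕ) (hN : N ≤ 2 * x + 2 * y) :
      (N !).factorization p = ∑ i ∈ Ico 1 (2 * x + 2 * y + 1), N / p ^ i :=
    factorization_factorial hp ((log_le_self p N).trans_lt (by omega))
  simp only [factorization_mul, factorial_ne_zero, mul_ne_zero_iff, ne_eq, not_false_eq_true,
    and_self, Finsupp.coe_add, Pi.add_apply]
  rw [legendre x (by omega), legendre y (by omega), legendre (x + y) (by omega),
    legendre (2 * x) (by omega), legendre (2 * y) (by omega),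
    ← sum_add_distrib, ← sum_add_distrib, ← sum_add_distrib]
  exact sum_le_sum fun i _ ↦ div_add_div_add_add_div_le x y (p ^ i)

end Nat

theorem factorial_ratio_family_three_integral_general
    (a b : ℕ) (n : ℕ) :
    (a * n)! * (b * n)! * ((a + b) * n)! ∣ (2 * a * n)! * (2 * b * n)! := by
  simpa only [mul_assoc, add_mul] using
    Nat.factorial_mul_factorial_mul_factorial_add_dvd (a * n) (b * n)

theorem factorial_ratio_family_three_integral
    (a b : ℕ) (ha : 0 < a) (hb : 0 < b) (hab : Nat.Coprime a b) (n : ℕ) :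
    (a * n)! * (b * n)! * ((a + b) * n)! ∣ (2 * a * n)! * (2 * b * n)! :=
  factorial_ratio_family_three_integral_general a b n
end

section
/- The bivariate series u₂(x,y) = ∑_{m,n≥0} ((2m)!(2n)!/(m! n! (m+n)!)) x^m y^n satisfies the identity u₂(x,y) = (1/(x+y−4xy)) ( x/√(1−4x) + y/√(1−4y) ) on a neighborhood of the origin minus the zero locus of x+y−4xy; in particular u₂ is an algebraic function. -/
/-!
Writing `A m n` for the coefficients, one has `A (m+1) n + A m (n+1) = 4 A m n`. Multiplying the
series by `x`, `y` and `4xy` and using this recurrence, everything cancels in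
`(x + y - 4xy) u₂(x, y)` except the two boundary series `x u₂(x, 0) + y u₂(0, y)`, and
`u₂(x, 0) = ∑ C(2m, m) xᵐ = (1 - 4x)^(-1/2)` is a binomial series. The coefficients are bounded by
`4ᵐ 4ⁿ`, so all of this is valid for `‖x‖, ‖y‖ < 1/4`.
-/

open scoped Nat

theorem HasSum.add_snd_zero_succ {M : Type*} [AddCommMonoid M] [TopologicalSpace M]
    [ContinuousAdd M] {f : ℕ × ℕ → M} {a b : M}
    (h₀ : HasSum (fun m ↦ f (m, 0)) a) (h₁ : HasSum (fun p : ℕ × ℕ ↦ f (p.1, p.2 + 1)) b) :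
    HasSum f (a + b) := by
  let g : ℕ ⊕ ℕ × ℕ → ℕ × ℕ := Sum.elim (fun m ↦ (m, 0)) (fun p ↦ (p.1, p.2 + 1))
  have hg : g.Bijective := by
    refine ⟨Function.Injective.sumElim ?_ ?_ ?_, ?_⟩
    · intro m m' h; simpa using h
    · intro p p' h; ext <;> simp_all
    · simp
    · rintro ⟨m, _ | n⟩
      exacts [⟨.inl m, rfl⟩, ⟨.inr (m, n), rfl⟩]
  exact (Equiv.ofBijective g hg).hasSum_iff.mp (h₀.sum h₁)

section CompleteGroup

variable {E : Type*} [AddCommGroup E] [UniformSpace E] [IsUniformAddGroup E] [CompleteSpace E]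
  [T2Space E] {f : ℕ × ℕ → E} {s a : E}

theorem HasSum.sub_snd_zero (hf : HasSum f s) (h₀ : HasSum (fun m ↦ f (m, 0)) a) :
    HasSum (fun p : ℕ × ℕ ↦ f (p.1, p.2 + 1)) (s - a) := by
  obtain ⟨b, hb⟩ := hf.summable.comp_injective (i := fun p : ℕ × ℕ ↦ (p.1, p.2 + 1))
    (fun p q h ↦ by ext <;> simp_all)
  rw [hf.unique (h₀.add_snd_zero_succ hb), add_sub_cancel_left]
  exact hb

theorem HasSum.sub_fst_zero (hf : HasSum f s) (h₀ : HasSum (fun n ↦ f (0, n)) a) :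
    HasSum (fun p : ℕ × ℕ ↦ f (p.1 + 1, p.2)) (s - a) :=
  (Equiv.prodComm ℕ ℕ).hasSum_iff.mpr
    (((Equiv.prodComm ℕ ℕ).hasSum_iff.mpr hf).sub_snd_zero h₀)

end CompleteGroup

theorem Ring.choose_succ_mul {K : Type*} [Field K] [CharZero K] (a : K) (n : ℕ) :
    Ring.choose a (n + 1) * (n + 1) = Ring.choose a n * (a - n) := by
  simp only [Ring.choose_eq_smul, descPochhammer_succ_right, smul_eq_mul, Nat.factorial_succ,
    Polynomial.smeval_mul, Polynomial.smeval_sub, Polynomial.smeval_X, Polynomial.smeval_natCast,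
    nsmul_eq_mul]
  push_cast
  field_simp

theorem Ring.choose_neg_half_mul_neg_four_pow {K : Type*} [Field K] [CharZero K] (n : ℕ) :
    Ring.choose (-1 / 2 : K) n * (-4) ^ n = n.centralBinom := by
  induction n with
  | zero => simp
  | succ n ih =>
    have h : ((n : K) + 1) * (n + 1).centralBinom = 2 * (2 * n + 1) * n.centralBinom := by
      exact_mod_cast Nat.succ_mul_centralBinom_succ n
    apply mul_left_cancel₀ (Nat.cast_add_one_ne_zero n : ((n : K) + 1) ≠ 0)
    calc ((n : K) + 1) * (Ring.choose (-1 / 2 : K) (n + 1) * (-4) ^ (n + 1))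
        = Ring.choose (-1 / 2 : K) n * (-4) ^ n * (2 * (2 * n + 1)) := by
          rw [← mul_assoc, mul_comm _ (Ring.choose _ _), Ring.choose_succ_mul]; ring
      _ = _ := by rw [ih, h]; ring

theorem hasSum_centralBinom_mul_pow {x : ℂ} (hx : ‖x‖ < 1 / 4) :
    HasSum (fun n ↦ (n.centralBinom : ℂ) * x ^ n) ((1 - 4 * x) ^ (1 / 2 : ℂ))⁻¹ := by
  have hmem : -(4 * x) ∈ Metric.eball (0 : ℂ) 1 := by
    rw [← ENNReal.ofReal_one, Metric.eball_ofReal, mem_ball_zero_iff, norm_neg, norm_mul]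
    norm_num
    linarith
  have h := (Complex.one_add_cpow_hasFPowerSeriesOnBall_zero (a := -1 / 2)).hasSum hmem
  simp only [binomialSeries_apply, List.ofFn_const, List.prod_replicate, smul_eq_mul,
    ← sub_eq_add_neg, zero_sub] at h
  have hc (n : ℕ) : (n.centralBinom : ℂ) * x ^ n = Ring.choose (-1 / 2 : ℂ) n * (-(4 * x)) ^ n := by
    rw [← Ring.choose_neg_half_mul_neg_four_pow (K := ℂ)]; ring
  simp_rw [hc, ← Complex.cpow_neg, ← neg_div]
  exact h

noncomputable def superCatalan (m n : ℕ) : ℂ :=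
  ((2 * m)! * (2 * n)! : ℂ) / (m ! * n ! * (m + n)!)

theorem superCatalan_comm (m n : ℕ) : superCatalan m n = superCatalan n m := by
  rw [superCatalan, superCatalan, add_comm m n]; ring

theorem superCatalan_zero_right (m : ℕ) : superCatalan m 0 = m.centralBinom := by
  rw [superCatalan, Nat.centralBinom, Nat.cast_choose ℂ (by omega : m ≤ 2 * m), two_mul,
    Nat.add_sub_cancel]
  simp

theorem superCatalan_mul_choose (m n : ℕ) :
    superCatalan m n * (m + n).choose m = m.centralBinom * n.centralBinom := by
  rw [superCatalan, Nat.centralBinom, Nat.centralBinom,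
    Nat.cast_choose ℂ (by omega : m ≤ 2 * m), Nat.cast_choose ℂ (by omega : n ≤ 2 * n),
    Nat.cast_choose ℂ (by omega : m ≤ m + n)]
  simp only [two_mul, Nat.add_sub_cancel, Nat.add_sub_cancel_left]
  field_simp [Nat.factorial_ne_zero]

theorem norm_superCatalan_le (m n : ℕ) : ‖superCatalan m n‖ ≤ 4 ^ m * 4 ^ n := by
  have hchoose : (1 : ℝ) ≤ (m + n).choose m := by
    exact_mod_cast Nat.choose_pos (by omega)
  rw [← mul_div_cancel_right₀ (superCatalan m n)
    (by exact_mod_cast (Nat.choose_pos (by omega)).ne' : ((m + n).choose m : ℂ) ≠ 0),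
    superCatalan_mul_choose, norm_div, norm_mul]
  simp only [Complex.norm_natCast]
  calc _ ≤ ((m.centralBinom * n.centralBinom : ℕ) : ℝ) := by
        push_cast; exact div_le_self (by positivity) hchoose
    _ ≤ 4 ^ m * 4 ^ n := by
        exact_mod_cast Nat.mul_le_mul m.centralBinom_le_four_pow n.centralBinom_le_four_pow

theorem superCatalan_succ_left (m n : ℕ) :
    (m + n + 1) * superCatalan (m + 1) n = 2 * (2 * m + 1) * superCatalan m n := by
  rw [superCatalan, superCatalan, show 2 * (m + 1) = 2 * m + 1 + 1 by ring,
    show m + 1 + n = m + n + 1 by ring]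
  have hmn : (m : ℂ) + n + 1 ≠ 0 := by exact_mod_cast Nat.succ_ne_zero (m + n)
  simp only [Nat.factorial_succ]
  push_cast
  field_simp [Nat.factorial_ne_zero]
  ring

theorem superCatalan_succ_add_succ (m n : ℕ) :
    superCatalan (m + 1) n + superCatalan m (n + 1) = 4 * superCatalan m n := by
  have hm := superCatalan_succ_left m n
  have hn := superCatalan_succ_left n m
  rw [superCatalan_comm (n + 1), superCatalan_comm n, add_comm (n : ℂ)] at hn
  apply mul_left_cancel₀ (by exact_mod_cast Nat.succ_ne_zero (m + n) : ((m : ℂ) + n + 1) ≠ 0)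
  linear_combination hm + hn

theorem summable_superCatalan {x y : ℂ} (hx : ‖x‖ < 1 / 4) (hy : ‖y‖ < 1 / 4) :
    Summable fun p : ℕ × ℕ ↦ superCatalan p.1 p.2 * x ^ p.1 * y ^ p.2 := by
  have hgeom : Summable fun p : ℕ × ℕ ↦ (4 * ‖x‖) ^ p.1 * (4 * ‖y‖) ^ p.2 :=
    (summable_geometric_of_lt_one (by positivity) (by linarith)).mul_of_nonneg
      (summable_geometric_of_lt_one (by positivity) (by linarith))
      (fun _ ↦ by positivity) (fun _ ↦ by positivity)
  refine Summable.of_norm_bounded hgeom fun p ↦ ?_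
  rw [norm_mul, norm_mul, norm_pow, norm_pow, mul_pow, mul_pow]
  calc _ ≤ 4 ^ p.1 * 4 ^ p.2 * ‖x‖ ^ p.1 * ‖y‖ ^ p.2 := by
        gcongr; exact norm_superCatalan_le p.1 p.2
    _ = _ := by ring

theorem sub_mul_tsum_superCatalan {x y : ℂ} (hx : ‖x‖ < 1 / 4) (hy : ‖y‖ < 1 / 4) :
    (x + y - 4 * x * y) * ∑' p : ℕ × ℕ, superCatalan p.1 p.2 * x ^ p.1 * y ^ p.2 =
      x / (1 - 4 * x) ^ (1 / 2 : ℂ) + y / (1 - 4 * y) ^ (1 / 2 : ℂ) := by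
  set T : ℕ × ℕ → ℂ := fun p ↦ superCatalan p.1 p.2 * x ^ p.1 * y ^ p.2
  set S := ∑' p, T p
  have hT : HasSum T S := (summable_superCatalan hx hy).hasSum
  have hX : HasSum (fun p : ℕ × ℕ ↦ superCatalan p.1 (p.2 + 1) * x ^ (p.1 + 1) * y ^ (p.2 + 1))
      (x * S - x / (1 - 4 * x) ^ (1 / 2 : ℂ)) := by
    have h₀ : HasSum (fun m ↦ x * T (m, 0)) (x / (1 - 4 * x) ^ (1 / 2 : ℂ)) := by
      simpa [T, superCatalan_zero_right, div_eq_mul_inv] using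
        (hasSum_centralBinom_mul_pow hx).mul_left x
    refine ((hT.mul_left x).sub_snd_zero h₀).congr_fun fun p ↦ ?_
    simp only [T, pow_succ]; ring
  have hY : HasSum (fun p : ℕ × ℕ ↦ superCatalan (p.1 + 1) p.2 * x ^ (p.1 + 1) * y ^ (p.2 + 1))
      (y * S - y / (1 - 4 * y) ^ (1 / 2 : ℂ)) := by
    have h₀ : HasSum (fun n ↦ y * T (0, n)) (y / (1 - 4 * y) ^ (1 / 2 : ℂ)) := by
      simpa [T, superCatalan_comm 0, superCatalan_zero_right, div_eq_mul_inv] using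
        (hasSum_centralBinom_mul_pow hy).mul_left y
    refine ((hT.mul_left y).sub_fst_zero h₀).congr_fun fun p ↦ ?_
    simp only [T, pow_succ]; ring
  have h4 : HasSum (fun p : ℕ × ℕ ↦ superCatalan p.1 (p.2 + 1) * x ^ (p.1 + 1) * y ^ (p.2 + 1) +
      superCatalan (p.1 + 1) p.2 * x ^ (p.1 + 1) * y ^ (p.2 + 1)) (4 * x * y * S) := by
    refine (hT.mul_left (4 * x * y)).congr_fun fun p ↦ ?_
    rw [← add_mul, ← add_mul, add_comm, superCatalan_succ_add_succ]
    simp only [T, pow_succ]; ring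
  linear_combination (hX.add hY).unique h4

theorem one_sub_four_mul_ne_zero {x : ℂ} (hx : ‖x‖ < 1 / 4) : 1 - 4 * x ≠ 0 := by
  intro h
  have : ‖4 * x‖ = 1 := by rw [← sub_eq_zero.mp h, norm_one]
  rw [norm_mul, Complex.norm_ofNat] at this
  linarith

theorem mul_div_cpow_one_half_sq {z : ℂ} (hz : z ≠ 0) (x : ℂ) :
    z * (x / z ^ (1 / 2 : ℂ)) ^ 2 = x ^ 2 := by
  rw [div_pow, one_div, Complex.cpow_ofNat_inv_pow]
  field_simp

/-- Obtained by squaring away the square roots in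
`(x + y - 4xy) u = x / √(1 - 4x) + y / √(1 - 4y)`. -/
noncomputable def superCatalanPoly : MvPolynomial (Fin 3) ℂ :=
  open MvPolynomial in
  let w := (X 0 + X 1 - 4 * X 0 * X 1) * X 2
  ((1 - 4 * X 0) * (1 - 4 * X 1) * w ^ 2 - (1 - 4 * X 1) * X 0 ^ 2 - (1 - 4 * X 0) * X 1 ^ 2) ^ 2 -
    4 * X 0 ^ 2 * X 1 ^ 2 * (1 - 4 * X 0) * (1 - 4 * X 1)

theorem eval_superCatalanPoly (x y u : ℂ) :
    MvPolynomial.eval ![x, y, u] superCatalanPoly =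
      ((1 - 4 * x) * (1 - 4 * y) * ((x + y - 4 * x * y) * u) ^ 2 - (1 - 4 * y) * x ^ 2 -
          (1 - 4 * x) * y ^ 2) ^ 2 - 4 * x ^ 2 * y ^ 2 * (1 - 4 * x) * (1 - 4 * y) := by
  simp [superCatalanPoly]

theorem superCatalanPoly_ne_zero : superCatalanPoly ≠ 0 := fun h ↦ by
  have := eval_superCatalanPoly 1 1 1
  rw [h, map_zero] at this
  norm_num at this

theorem eval_superCatalanPoly_eq_zero {x y a b u : ℂ} (ha : (1 - 4 * x) * a ^ 2 = x ^ 2)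
    (hb : (1 - 4 * y) * b ^ 2 = y ^ 2) (hu : (x + y - 4 * x * y) * u = a + b) :
    MvPolynomial.eval ![x, y, u] superCatalanPoly = 0 := by
  have hab : (1 - 4 * x) * (1 - 4 * y) * (a + b) ^ 2 - (1 - 4 * y) * x ^ 2 - (1 - 4 * x) * y ^ 2 =
      2 * (1 - 4 * x) * (1 - 4 * y) * a * b := by
    linear_combination (1 - 4 * y) * ha + (1 - 4 * x) * hb
  rw [eval_superCatalanPoly, hu, hab]
  linear_combination 4 * (1 - 4 * x) * (1 - 4 * y) * ((1 - 4 * y) * b ^ 2 * ha + x ^ 2 * hb)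

theorem super_catalan_generating_function :
    ∃ ε > (0 : ℝ),
      (∀ x y : ℂ, ‖x‖ < ε → ‖y‖ < ε → x + y - 4 * x * y ≠ 0 →
        HasSum (fun mn : ℕ × ℕ =>
            (((2 * mn.1)! * (2 * mn.2)! : ℂ) / ((mn.1)! * (mn.2)! * (mn.1 + mn.2)!)) *
              x ^ mn.1 * y ^ mn.2)
          ((1 / (x + y - 4 * x * y)) *
            (x / (1 - 4 * x) ^ ((1 : ℂ) / 2) + y / (1 - 4 * y) ^ ((1 : ℂ) / 2)))) ∧
      ∃ P : MvPolynomial (Fin 3) ℂ, P ≠ 0 ∧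
        ∀ x y : ℂ, ‖x‖ < ε → ‖y‖ < ε →
          MvPolynomial.eval
            ![x, y, ∑' mn : ℕ × ℕ,
              (((2 * mn.1)! * (2 * mn.2)! : ℂ) / ((mn.1)! * (mn.2)! * (mn.1 + mn.2)!)) *
                x ^ mn.1 * y ^ mn.2] P = 0 := by
  refine ⟨1 / 4, by norm_num, fun x y hx hy hxy ↦ ?_,
    superCatalanPoly, superCatalanPoly_ne_zero, fun x y hx hy ↦ ?_⟩
  · rw [one_div, ← sub_mul_tsum_superCatalan hx hy, inv_mul_cancel_left₀ hxy]
    exact (summable_superCatalan hx hy).hasSum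
  · exact eval_superCatalanPoly_eq_zero
      (mul_div_cpow_one_half_sq (one_sub_four_mul_ne_zero hx) x)
      (mul_div_cpow_one_half_sq (one_sub_four_mul_ne_zero hy) y)
      (sub_mul_tsum_superCatalan hx hy)
end

section
/- The generating function identity (1−xy)/(1 − xy² − 3xy − x²y) = ∑ binom(m+n, 2m−n) x^m y^n holds, where the sum is over all (m,n) ∈ ℕ² with 2m ≥ n and 2n ≥ m, i.e., over the lattice points of the cone {2m−n ≥ 0, 2n−m ≥ 0}. -/
/-!
Put `c m n = [t^(2m)] t^n (1 + t)^(m + n)`, which is `binom(m + n, 2m - n)` on the cone and `0`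
off it. The identity `(1 + t)^3 = 1 + 3t(1 + t) + t^3` gives
`c m n = c (m-1) (n-2) + 3 c (m-1) (n-1) + c (m-2) (n-1)` for all `(m, n)` other than `(0, 0)` and
`(1, 1)`, so multiplying the series `∑ c m n x^m y^n` (absolutely convergent for small `x, y`, as
`c m n ≤ 2^(m + n)`) by `1 - xy² - 3xy - x²y` leaves `1 - xy`.
-/

open Polynomial

def shiftCoeff {R : Type*} [Zero R] (s : ℕ × ℕ) (c : ℕ × ℕ → R) (p : ℕ × ℕ) : R :=
  if s ≤ p then c (p - s) else 0

theorem HasSum.shiftCoeff {R : Type*} [CommSemiring R] [TopologicalSpace R]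
    [IsTopologicalSemiring R] {c : ℕ × ℕ → R} {x y S : R}
    (h : HasSum (fun p => c p * (x ^ p.1 * y ^ p.2)) S) (s : ℕ × ℕ) :
    HasSum (fun p => shiftCoeff s c p * (x ^ p.1 * y ^ p.2)) (x ^ s.1 * y ^ s.2 * S) := by
  rw [← (add_left_injective s).hasSum_iff]
  · refine (h.mul_left _).congr_fun fun p => ?_
    simp only [Function.comp_apply, _root_.shiftCoeff, le_add_self, if_true,
      add_tsub_cancel_right, Prod.fst_add, Prod.snd_add, pow_add]
    ring
  · intro p hp
    have hsp : ¬ s ≤ p := fun hsp => hp ⟨p - s, tsub_add_cancel_of_le hsp⟩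
    simp [_root_.shiftCoeff, hsp]

noncomputable def coneBinom (m n : ℕ) : ℕ := ((1 + X) ^ (m + n) * X ^ n : ℕ[X]).coeff (2 * m)

theorem coneBinom_eq_ite (m n : ℕ) :
    coneBinom m n = if 2 * m ≥ n ∧ 2 * n ≥ m then (m + n).choose (2 * m - n) else 0 := by
  rw [coneBinom, coeff_mul_X_pow', coeff_one_add_X_pow]
  by_cases hn : n ≤ 2 * m
  · by_cases hm : m ≤ 2 * n
    · simp [hn, hm]
    · simp [hn, hm, Nat.choose_eq_zero_of_lt (show m + n < 2 * m - n by omega)]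
  · simp [hn]

theorem coneBinom_le_two_pow (m n : ℕ) : coneBinom m n ≤ 2 ^ (m + n) := by
  rw [coneBinom_eq_ite]
  split_ifs
  exacts [Nat.choose_le_two_pow _ _, Nat.zero_le _]

theorem coneBinom_zero_left (n : ℕ) : coneBinom 0 n = if n = 0 then 1 else 0 := by
  simp [coneBinom_eq_ite]

theorem coneBinom_one_left (n : ℕ) :
    coneBinom 1 n = if n = 1 then 2 else if n = 2 then 1 else 0 := by
  rw [coneBinom_eq_ite]
  rcases n with _ | _ | _ | n <;> simp

theorem coneBinom_zero_right (m : ℕ) : coneBinom m 0 = if m = 0 then 1 else 0 := by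
  rcases m with _ | m <;> simp [coneBinom_eq_ite]

theorem coneBinom_one_right (m : ℕ) :
    coneBinom m 1 = if m = 1 then 2 else if m = 2 then 1 else 0 := by
  rw [coneBinom_eq_ite]
  rcases m with _ | _ | _ | m <;> simp

theorem coneBinom_add_two_add_two (m n : ℕ) :
    coneBinom (m + 2) (n + 2) =
      coneBinom (m + 1) n + 3 * coneBinom (m + 1) (n + 1) + coneBinom m (n + 1) := by
  have key : ((1 + X) ^ (m + 2 + (n + 2)) * X ^ (n + 2) : ℕ[X]) =
      (1 + X) ^ (m + 1 + n) * X ^ n * X ^ 2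
        + C 3 * ((1 + X) ^ (m + 1 + (n + 1)) * X ^ (n + 1) * X ^ 2)
        + (1 + X) ^ (m + (n + 1)) * X ^ (n + 1) * X ^ 4 := by
    simp only [map_ofNat]
    ring
  simp only [coneBinom, key, coeff_add, coeff_C_mul, coeff_mul_X_pow,
    show 2 * (m + 2) = 2 * (m + 1) + 2 by ring]
  rw [show 2 * (m + 1) + 2 = 2 * m + 4 by ring, coeff_mul_X_pow]

theorem coneBinom_recurrence (p : ℕ × ℕ) :
    coneBinom p.1 p.2 + (if p = (1, 1) then 1 else 0) =
      shiftCoeff (1, 2) (fun q => coneBinom q.1 q.2) p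
        + 3 * shiftCoeff (1, 1) (fun q => coneBinom q.1 q.2) p
        + shiftCoeff (2, 1) (fun q => coneBinom q.1 q.2) p + (if p = 0 then 1 else 0) := by
  obtain ⟨_ | _ | m, _ | _ | n⟩ := p
  case succ.succ.succ.succ =>
    simpa [shiftCoeff, Prod.le_def] using coneBinom_add_two_add_two m n
  all_goals simp [shiftCoeff, Prod.le_def, coneBinom_zero_left, coneBinom_one_left,
    coneBinom_zero_right, coneBinom_one_right]

theorem summable_coneBinom {R : Type*} [NormedRing R] [NormOneClass R] [CompleteSpace R]
    {x y : R} (hx : ‖x‖ < 1 / 2) (hy : ‖y‖ < 1 / 2) :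
    Summable (fun p : ℕ × ℕ => (coneBinom p.1 p.2 : R) * (x ^ p.1 * y ^ p.2)) := by
  refine Summable.of_norm_bounded (g := fun p : ℕ × ℕ => (2 * ‖x‖) ^ p.1 * (2 * ‖y‖) ^ p.2)
    ((summable_geometric_of_lt_one (by positivity) (by linarith)).mul_of_nonneg
      (summable_geometric_of_lt_one (by positivity) (by linarith)) (fun _ => by positivity)
      (fun _ => by positivity)) fun p => ?_
  calc ‖(coneBinom p.1 p.2 : R) * (x ^ p.1 * y ^ p.2)‖
      ≤ coneBinom p.1 p.2 * (‖x‖ ^ p.1 * ‖y‖ ^ p.2) := by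
        refine (norm_mul_le _ _).trans (mul_le_mul ?_ ((norm_mul_le _ _).trans ?_)
          (norm_nonneg _) (Nat.cast_nonneg _))
        · simpa using Nat.norm_cast_le (α := R) (coneBinom p.1 p.2)
        · gcongr <;> exact norm_pow_le _ _
    _ ≤ 2 ^ (p.1 + p.2) * (‖x‖ ^ p.1 * ‖y‖ ^ p.2) := by
        gcongr
        exact_mod_cast coneBinom_le_two_pow p.1 p.2
    _ = (2 * ‖x‖) ^ p.1 * (2 * ‖y‖) ^ p.2 := by ring

theorem mul_eq_of_hasSum_coneBinom {R : Type*} [CommRing R] [TopologicalSpace R]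
    [IsTopologicalRing R] [T2Space R] {x y S : R}
    (h : HasSum (fun p : ℕ × ℕ => (coneBinom p.1 p.2 : R) * (x ^ p.1 * y ^ p.2)) S) :
    (1 - x * y ^ 2 - 3 * x * y - x ^ 2 * y) * S = 1 - x * y := by
  set c : ℕ × ℕ → R := fun p => coneBinom p.1 p.2
  have hc (p : ℕ × ℕ) :
      c p - shiftCoeff (1, 2) c p - 3 * shiftCoeff (1, 1) c p - shiftCoeff (2, 1) c p
        = (if p = 0 then 1 else 0) - (if p = (1, 1) then 1 else 0) := by
    have hp := congrArg (Nat.cast (R := R)) (coneBinom_recurrence p)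
    simp only [Nat.cast_add, Nat.cast_mul, Nat.cast_ite, Nat.cast_one, Nat.cast_zero,
      Nat.cast_ofNat, shiftCoeff] at hp ⊢
    linear_combination hp
  have hcomb := ((h.sub (h.shiftCoeff (1, 2))).sub ((h.shiftCoeff (1, 1)).mul_left 3)).sub
    (h.shiftCoeff (2, 1))
  have hδ := hcomb.congr_fun
    (g := fun p => (if p = 0 then 1 else 0) - (if p = (1, 1) then x * y else 0)) fun p => by
      trans (c p - shiftCoeff (1, 2) c p - 3 * shiftCoeff (1, 1) c p - shiftCoeff (2, 1) c p)
        * (x ^ p.1 * y ^ p.2)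
      · rw [hc p, sub_mul]
        congr 1 <;> split_ifs with hp <;> simp [hp]
      · ring
  linear_combination hδ.unique ((hasSum_ite_eq 0 1).sub (hasSum_ite_eq (1, 1) (x * y)))

theorem gessel_xin_cone_generating_function :
    ∃ ε > (0 : ℝ), ∀ x y : ℂ, ‖x‖ < ε → ‖y‖ < ε →
      HasSum (fun mn : ℕ × ℕ =>
          if 2 * mn.1 ≥ mn.2 ∧ 2 * mn.2 ≥ mn.1 then
            ((mn.1 + mn.2).choose (2 * mn.1 - mn.2) : ℂ) * x ^ mn.1 * y ^ mn.2
          else 0)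
        ((1 - x * y) / (1 - x * y ^ 2 - 3 * x * y - x ^ 2 * y)) := by
  refine ⟨1 / 2, by norm_num, fun x y hx hy => ?_⟩
  have hterm : (fun mn : ℕ × ℕ => if 2 * mn.1 ≥ mn.2 ∧ 2 * mn.2 ≥ mn.1 then
      ((mn.1 + mn.2).choose (2 * mn.1 - mn.2) : ℂ) * x ^ mn.1 * y ^ mn.2 else 0) =
      fun p => (coneBinom p.1 p.2 : ℂ) * (x ^ p.1 * y ^ p.2) := by
    funext p
    rw [coneBinom_eq_ite]
    split_ifs <;> simp [mul_assoc]
  have hxy : 1 - x * y ≠ 0 := by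
    have hlt : ‖x * y‖ < 1 := by
      rw [norm_mul]
      nlinarith [norm_nonneg x, norm_nonneg y]
    exact sub_ne_zero.mpr fun h => by simp [← h] at hlt
  obtain ⟨S, hS⟩ := summable_coneBinom hx hy
  have hD := mul_eq_of_hasSum_coneBinom hS
  have hS_eq : S = (1 - x * y) / (1 - x * y ^ 2 - 3 * x * y - x ^ 2 * y) :=
    eq_div_of_mul_eq (left_ne_zero_of_mul (hD ▸ hxy)) (by rw [mul_comm, hD])
  rw [hterm, ← hS_eq]
  exact hS
end

section
/- If p and q are relatively prime positive integers, then the univariate power series ∑_{m≥0} ( (2pm)! (2qm)! / ((pm)!² (qm)!²) ) z^m is not an algebraic function of z. -/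
open scoped Nat

/-- A function of one complex variable is algebraic near the origin: it satisfies a
nonzero polynomial equation with polynomial coefficients. -/
def IsAlgebraicFn (g : ℂ → ℂ) : Prop :=
  ∃ P : Polynomial (Polynomial ℂ), P ≠ 0 ∧
    ∃ ε > (0 : ℝ), ∀ t : ℂ, ‖t‖ < ε →
      (P.map (Polynomial.evalRingHom t)).eval (g t) = 0

/-!
Since `(2n)! / (n!)² = C(2n, n)` and `16ⁿ / (4n) ≤ C(2n, n)² ≤ 16ⁿ / (n + 1)` for `n ≥ 1`, the
coefficients `a_m = C(2pm, pm) C(2qm, qm)` satisfy `1 / (4pqm) ≤ a_m rᵐ ≤ 1 / m` for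
`r = 4^(-(p+q))` and `m ≥ 1`. So the
series `g` converges on the disc of radius `r`, and at the point `r (1 - e^(-L))` of the real
radius its value lies between `1 + L / (4pq)` and `1 + L`: `g` has a logarithmic singularity at
`r`. If `P(z, g z) = 0` near `0`, the identity theorem extends this to the whole disc. Write
`P = (X - r)ᵏ Q` with `Q(r, ·) ≠ 0` of degree `e`. Along the radius `g → ∞` while
`(x - r) gᵐ → 0` for every `m`, so `Q(x, g x) / gᵉ` tends to the leading coefficient of
`Q(r, ·)` and cannot vanish.
-/

open Polynomial Filter Topology

namespace Polynomial

section Algebra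

lemma C_X_sub_C_dvd_iff_map_evalRingHom_eq_zero {R : Type*} [CommRing R] (Q : R[X][X]) (ρ : R) :
    C (X - C ρ) ∣ Q ↔ Q.map (evalRingHom ρ) = 0 := by
  rw [C_dvd_iff_dvd_coeff, Polynomial.ext_iff]
  simp [dvd_iff_isRoot]

variable {𝕜 : Type*} [Field 𝕜]

lemma exists_eq_C_X_sub_C_pow_mul_map_ne_zero {P : 𝕜[X][X]} (hP : P ≠ 0) (ρ : 𝕜) :
    ∃ (k : ℕ) (Q : 𝕜[X][X]), P = C (X - C ρ) ^ k * Q ∧ Q.map (evalRingHom ρ) ≠ 0 := by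
  obtain ⟨k, Q, hndvd, rfl⟩ := WfDvdMonoid.max_power_factor' (x := C (X - C ρ)) hP
    (isUnit_C.not.mpr (not_isUnit_X_sub_C ρ))
  exact ⟨k, Q, rfl, (C_X_sub_C_dvd_iff_map_evalRingHom_eq_zero Q ρ).not.mp hndvd⟩

end Algebra

section Asymptotics

variable {𝕜 α : Type*} [NormedField 𝕜] {l : Filter α} {x G : α → 𝕜} {ρ : 𝕜}

lemma tendsto_eval_mul_pow_of_isRoot {f : 𝕜[X]} (hf : f.IsRoot ρ) (hx : Tendsto x l (𝓝 ρ))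
    {m : ℕ} (hxG : Tendsto (fun a ↦ ‖x a - ρ‖ * ‖G a‖ ^ m) l (𝓝 0)) :
    Tendsto (fun a ↦ f.eval (x a) * G a ^ m) l (𝓝 0) := by
  have hquot : Tendsto (fun a ↦ (f /ₘ (X - C ρ)).eval (x a)) l
      (𝓝 ((f /ₘ (X - C ρ)).eval ρ)) :=
    ((f /ₘ (X - C ρ)).continuous.tendsto ρ).comp hx
  have hsmall : Tendsto (fun a ↦ (x a - ρ) * G a ^ m) l (𝓝 0) :=
    tendsto_zero_iff_norm_tendsto_zero.mpr (by simpa [norm_mul, norm_pow] using hxG)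
  convert hsmall.mul hquot using 2 with a
  · conv_lhs => rw [← mul_divByMonic_eq_iff_isRoot.mpr hf]
    simp only [eval_mul, eval_sub, eval_X, eval_C]
    ring
  · simp

lemma tendsto_eval_coeff_mul_pow_div_pow (Q : 𝕜[X][X]) (j : ℕ) (hx : Tendsto x l (𝓝 ρ))
    (hG : Tendsto (fun a ↦ ‖G a‖) l atTop)
    (hxG : ∀ m : ℕ, Tendsto (fun a ↦ ‖x a - ρ‖ * ‖G a‖ ^ m) l (𝓝 0)) :
    Tendsto (fun a ↦ (Q.coeff j).eval (x a) * (G a ^ j / G a ^ (Q.map (evalRingHom ρ)).natDegree))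
      l (𝓝 (if j = (Q.map (evalRingHom ρ)).natDegree then (Q.map (evalRingHom ρ)).leadingCoeff
        else 0)) := by
  set e := (Q.map (evalRingHom ρ)).natDegree
  have hG0 : ∀ᶠ a in l, G a ≠ 0 := (hG.eventually_gt_atTop 0).mono fun _ ↦ norm_pos_iff.mp
  have hcoeff : Tendsto (fun a ↦ (Q.coeff j).eval (x a)) l (𝓝 ((Q.coeff j).eval ρ)) :=
    ((Q.coeff j).continuous.tendsto ρ).comp hx
  rcases lt_trichotomy j e with hj | rfl | hj
  · have hinv : Tendsto (fun a ↦ (G a ^ (e - j))⁻¹) l (𝓝 0) :=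
      tendsto_inv₀_cobounded.comp <| tendsto_norm_atTop_iff_cobounded.mp <| by
        simpa [norm_pow, Function.comp_def] using (tendsto_pow_atTop (by omega)).comp hG
    rw [if_neg hj.ne, ← mul_zero ((Q.coeff j).eval ρ)]
    refine (hcoeff.mul hinv).congr' (hG0.mono fun a ha ↦ ?_)
    dsimp only
    rw [← pow_sub_mul_pow (G a) hj.le]
    field_simp
  · rw [if_pos rfl, leadingCoeff, coeff_map]
    refine hcoeff.congr' (hG0.mono fun a ha ↦ ?_)
    simp [div_self (pow_ne_zero _ ha)]
  · have hroot : (Q.coeff j).IsRoot ρ := by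
      simpa [coeff_map] using coeff_eq_zero_of_natDegree_lt (p := Q.map (evalRingHom ρ)) hj
    rw [if_neg hj.ne']
    refine (tendsto_eval_mul_pow_of_isRoot hroot hx (hxG (j - e))).congr'
      (hG0.mono fun a ha ↦ ?_)
    dsimp only
    rw [← pow_sub_mul_pow (G a) hj.le]
    field_simp

lemma eventually_eval_map_ne_zero_of_map_ne_zero {Q : 𝕜[X][X]}
    (hQ : Q.map (evalRingHom ρ) ≠ 0) (hG : Tendsto (fun a ↦ ‖G a‖) l atTop)
    (hxG : ∀ m : ℕ, Tendsto (fun a ↦ ‖x a - ρ‖ * ‖G a‖ ^ m) l (𝓝 0)) :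
    ∀ᶠ a in l, (Q.map (evalRingHom (x a))).eval (G a) ≠ 0 := by
  have hx : Tendsto x l (𝓝 ρ) := tendsto_iff_norm_sub_tendsto_zero.mpr (by simpa using hxG 0)
  have hlim : Tendsto (fun a ↦ (Q.map (evalRingHom (x a))).eval (G a) /
      G a ^ (Q.map (evalRingHom ρ)).natDegree) l
      (𝓝 (Q.map (evalRingHom ρ)).leadingCoeff) := by
    have h := tendsto_finsetSum (Finset.range (Q.natDegree + 1)) fun j _ ↦
      tendsto_eval_coeff_mul_pow_div_pow Q j hx hG hxG
    rw [Finset.sum_ite_eq', if_pos (Finset.mem_range_succ_iff.mpr natDegree_map_le)] at h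
    refine h.congr fun a ↦ ?_
    rw [eval_map, eval₂_eq_sum_range, Finset.sum_div]
    simp [mul_div_assoc]
  filter_upwards [hlim.eventually_ne (leadingCoeff_ne_zero.mpr hQ)] with a ha h0
  simp [h0] at ha

lemma eventually_eval_map_ne_zero {P : 𝕜[X][X]} (hP : P ≠ 0) (hxρ : ∀ᶠ a in l, x a ≠ ρ)
    (hG : Tendsto (fun a ↦ ‖G a‖) l atTop)
    (hxG : ∀ m : ℕ, Tendsto (fun a ↦ ‖x a - ρ‖ * ‖G a‖ ^ m) l (𝓝 0)) :
    ∀ᶠ a in l, (P.map (evalRingHom (x a))).eval (G a) ≠ 0 := by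
  obtain ⟨k, Q, rfl, hQ⟩ := exists_eq_C_X_sub_C_pow_mul_map_ne_zero hP ρ
  filter_upwards [eventually_eval_map_ne_zero_of_map_ne_zero hQ hG hxG, hxρ] with a hQa hxa
  simpa [Polynomial.map_mul, Polynomial.map_pow, sub_eq_zero, hxa] using hQa

end Asymptotics

end Polynomial

section Analytic

variable {𝕜 : Type*} [NontriviallyNormedField 𝕜]

lemma AnalyticOnNhd.eval_map_evalRingHom_eq_zero {g : 𝕜 → 𝕜} {U : Set 𝕜}
    (hg : AnalyticOnNhd 𝕜 g U) (hU : IsPreconnected U) {z₀ : 𝕜} (h₀ : z₀ ∈ U) {P : 𝕜[X][X]}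
    (hP : ∀ᶠ t in 𝓝 z₀, (P.map (evalRingHom t)).eval (g t) = 0) {t : 𝕜} (ht : t ∈ U) :
    (P.map (evalRingHom t)).eval (g t) = 0 := by
  have hPg : AnalyticOnNhd 𝕜 (fun t ↦ (P.map (evalRingHom t)).eval (g t)) U := by
    simp_rw [eval_map, eval₂_eq_sum_range, coe_evalRingHom]
    exact Finset.analyticOnNhd_fun_sum _ fun j _ ↦
      ((AnalyticOnNhd.eval_polynomial (P.coeff j)).mono (Set.subset_univ U)).mul (hg.pow j)
  exact hPg.eqOn_zero_of_preconnected_of_eventuallyEq_zero hU h₀ hP ht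

lemma analyticOnNhd_tsum_mul_pow [CompleteSpace 𝕜] {c : ℕ → 𝕜} {r C : ℝ}
    (hc : ∀ m, ‖c m‖ * r ^ m ≤ C) :
    AnalyticOnNhd 𝕜 (fun z ↦ ∑' m, c m * z ^ m) (Metric.ball 0 r) := by
  rcases lt_or_ge r 0 with hr | hr
  · simp [Metric.ball_eq_empty.mpr hr.le]
  lift r to NNReal using hr
  have hradius : (r : ENNReal) ≤ (FormalMultilinearSeries.ofScalars 𝕜 c).radius :=
    FormalMultilinearSeries.le_radius_of_bound _ C fun m ↦ by
      simpa [FormalMultilinearSeries.ofScalars_norm] using hc m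
  have h := (FormalMultilinearSeries.ofScalars 𝕜 c).analyticOnNhd.mono
    (Metric.eball_subset_eball (x := 0) hradius)
  rw [Metric.eball_coe, ← FormalMultilinearSeries.ofScalarsSum,
    FormalMultilinearSeries.ofScalarsSum_eq_tsum] at h
  simpa only [smul_eq_mul] using h

end Analytic

namespace Real

lemma tsum_mul_pow_mem_Icc_of_mem_Icc_div_succ {c : ℕ → ℝ} {a b s : ℝ} (ha : 0 ≤ a)
    (hc : ∀ m : ℕ, c (m + 1) ∈ Set.Icc (a / (m + 1)) (b / (m + 1))) (hs0 : 0 ≤ s)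
    (hs1 : s < 1) :
    ∑' m, c m * s ^ m ∈ Set.Icc (c 0 + a * -log (1 - s)) (c 0 + b * -log (1 - s)) := by
  have hlog := hasSum_pow_div_log_of_abs_lt_one (abs_lt.mpr ⟨by linarith, hs1⟩)
  have hlower (m : ℕ) : a * (s ^ (m + 1) / (m + 1)) ≤ c (m + 1) * s ^ (m + 1) :=
    calc a * (s ^ (m + 1) / (m + 1)) = a / (m + 1) * s ^ (m + 1) := by ring
      _ ≤ c (m + 1) * s ^ (m + 1) := by gcongr; exact (hc m).1
  have hupper (m : ℕ) : c (m + 1) * s ^ (m + 1) ≤ b * (s ^ (m + 1) / (m + 1)) :=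
    calc c (m + 1) * s ^ (m + 1) ≤ b / (m + 1) * s ^ (m + 1) := by gcongr; exact (hc m).2
      _ = b * (s ^ (m + 1) / (m + 1)) := by ring
  have htail : Summable fun m : ℕ ↦ c (m + 1) * s ^ (m + 1) :=
    (hlog.summable.mul_left b).of_nonneg_of_le
      (fun m ↦ (mul_nonneg ha (by positivity)).trans (hlower m)) hupper
  have hsplit : ∑' m, c m * s ^ m = c 0 + ∑' m, c (m + 1) * s ^ (m + 1) := by
    simpa using ((summable_nat_add_iff (f := fun m ↦ c m * s ^ m) 1).mp htail).tsum_eq_zero_add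
  rw [hsplit, ← (hlog.mul_left a).tsum_eq, ← (hlog.mul_left b).tsum_eq]
  exact ⟨add_le_add_right ((hlog.summable.mul_left a).tsum_le_tsum hlower htail) _,
    add_le_add_right (htail.tsum_le_tsum hupper (hlog.summable.mul_left b)) _⟩

lemma tendsto_exp_neg_mul_one_add_pow_atTop (m : ℕ) :
    Tendsto (fun L : ℝ ↦ exp (-L) * (1 + L) ^ m) atTop (𝓝 0) := by
  have h := (tendsto_pow_mul_exp_neg_atTop_nhds_zero m).comp
    (tendsto_atTop_add_const_left atTop 1 tendsto_id)
  simpa [Function.comp_def, exp_add, exp_neg, mul_comm, mul_left_comm, mul_assoc] using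
    h.const_mul (exp 1)

end Real

namespace Nat

lemma cast_factorial_two_mul_div_sq {K : Type*} [Field K] [CharZero K] (n : ℕ) :
    ((2 * n)! : K) / (n ! : K) ^ 2 = centralBinom n := by
  rw [centralBinom_eq_two_mul_choose, Nat.cast_choose K (by omega : n ≤ 2 * n),
    show 2 * n - n = n by omega, sq]

lemma succ_mul_centralBinom_sq_le_sixteen_pow (n : ℕ) :
    (n + 1) * centralBinom n ^ 2 ≤ 16 ^ n := by
  induction n with
  | zero => simp
  | succ n ih =>
    have hrec := succ_mul_centralBinom_succ n
    refine le_of_mul_le_mul_left ?_ (by positivity : 0 < (n + 1) ^ 2)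
    calc (n + 1) ^ 2 * ((n + 2) * centralBinom (n + 1) ^ 2)
        = (n + 2) * ((n + 1) * centralBinom (n + 1)) ^ 2 := by ring
      _ = 4 * (n + 2) * (2 * n + 1) ^ 2 * centralBinom n ^ 2 := by rw [hrec]; ring
      _ ≤ 16 * (n + 1) ^ 3 * centralBinom n ^ 2 := by gcongr ?_ * _; nlinarith
      _ = 16 * (n + 1) ^ 2 * ((n + 1) * centralBinom n ^ 2) := by ring
      _ ≤ 16 * (n + 1) ^ 2 * 16 ^ n := by gcongr
      _ = (n + 1) ^ 2 * 16 ^ (n + 1) := by ring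

lemma sixteen_pow_le_four_mul_mul_centralBinom_sq {n : ℕ} (hn : 0 < n) :
    16 ^ n ≤ 4 * n * centralBinom n ^ 2 := by
  induction n, hn using Nat.le_induction with
  | base => decide
  | succ n hn ih =>
    have hrec := succ_mul_centralBinom_succ n
    refine le_of_mul_le_mul_left ?_ (succ_pos n)
    calc (n + 1) * 16 ^ (n + 1) = 16 * (n + 1) * 16 ^ n := by ring
      _ ≤ 16 * (n + 1) * (4 * n * centralBinom n ^ 2) := by gcongr
      _ ≤ 4 * (2 * (2 * n + 1) * centralBinom n) ^ 2 := by nlinarith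
      _ = (n + 1) * (4 * (n + 1) * centralBinom (n + 1) ^ 2) := by rw [← hrec]; ring

variable {p q : ℕ}

lemma mul_centralBinom_mul_centralBinom_le (hp : 0 < p) (hq : 0 < q) (m : ℕ) :
    m * (centralBinom (p * m) * centralBinom (q * m)) ≤ 4 ^ ((p + q) * m) := by
  refine (Nat.pow_le_pow_iff_left two_ne_zero).mp ?_
  calc (m * (centralBinom (p * m) * centralBinom (q * m))) ^ 2
      = (m * m) * (centralBinom (p * m) ^ 2 * centralBinom (q * m) ^ 2) := by ring
    _ ≤ ((p * m + 1) * (q * m + 1)) * (centralBinom (p * m) ^ 2 * centralBinom (q * m) ^ 2) := by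
        gcongr <;> nlinarith
    _ = ((p * m + 1) * centralBinom (p * m) ^ 2) * ((q * m + 1) * centralBinom (q * m) ^ 2) := by
        ring
    _ ≤ 16 ^ (p * m) * 16 ^ (q * m) := by
        gcongr <;> exact succ_mul_centralBinom_sq_le_sixteen_pow _
    _ = (4 ^ ((p + q) * m)) ^ 2 := by rw [← pow_add, ← add_mul, sq, ← mul_pow]; rfl

lemma four_pow_le_mul_centralBinom_mul_centralBinom (hp : 0 < p) (hq : 0 < q) {m : ℕ}
    (hm : 0 < m) :
    4 ^ ((p + q) * m) ≤ 4 * p * q * m * (centralBinom (p * m) * centralBinom (q * m)) := by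
  refine (Nat.pow_le_pow_iff_left two_ne_zero).mp ?_
  calc (4 ^ ((p + q) * m)) ^ 2 = 16 ^ (p * m) * 16 ^ (q * m) := by
        rw [← pow_add, ← add_mul, sq, ← mul_pow]; rfl
    _ ≤ (4 * (p * m) * centralBinom (p * m) ^ 2) * (4 * (q * m) * centralBinom (q * m) ^ 2) := by
        gcongr <;> exact sixteen_pow_le_four_mul_mul_centralBinom_sq (by positivity)
    _ = 16 * (p * q) * m ^ 2 * (centralBinom (p * m) * centralBinom (q * m)) ^ 2 := by ring
    _ ≤ 16 * (p * q) ^ 2 * m ^ 2 * (centralBinom (p * m) * centralBinom (q * m)) ^ 2 := by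
        gcongr; nlinarith [Nat.mul_pos hp hq]
    _ = (4 * p * q * m * (centralBinom (p * m) * centralBinom (q * m))) ^ 2 := by ring

end Nat

section CentralBinomSeries

open Nat Real

variable {p q : ℕ}

noncomputable def centralBinomSeries (p q : ℕ) (z : ℂ) : ℂ :=
  ∑' m : ℕ, ((p * m).centralBinom * (q * m).centralBinom : ℂ) * z ^ m

lemma tsum_factorial_ratio_eq_centralBinomSeries (p q : ℕ) :
    (fun z : ℂ ↦ ∑' m : ℕ,
      (((2 * p * m)! * (2 * q * m)! : ℂ) / (((p * m)!) ^ 2 * ((q * m)!) ^ 2)) * z ^ m) =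
      centralBinomSeries p q := by
  funext z
  refine tsum_congr fun m ↦ ?_
  rw [mul_div_mul_comm, mul_assoc 2 p, mul_assoc 2 q, cast_factorial_two_mul_div_sq,
    cast_factorial_two_mul_div_sq]

lemma analyticOnNhd_centralBinomSeries (p q : ℕ) :
    AnalyticOnNhd ℂ (centralBinomSeries p q) (Metric.ball 0 (4 ^ (p + q))⁻¹) := by
  refine analyticOnNhd_tsum_mul_pow (C := 1) fun m ↦ ?_
  rw [← Nat.cast_mul, Complex.norm_natCast, inv_pow, ← div_eq_mul_inv,
    div_le_one (by positivity), ← pow_mul, add_mul, pow_add]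
  exact_mod_cast Nat.mul_le_mul (centralBinom_le_four_pow _) (centralBinom_le_four_pow _)

noncomputable def centralBinomCoeff (p q m : ℕ) : ℝ :=
  ((p * m).centralBinom * (q * m).centralBinom : ℝ) / 4 ^ ((p + q) * m)

lemma centralBinomCoeff_succ_mem_Icc (hp : 0 < p) (hq : 0 < q) (m : ℕ) :
    centralBinomCoeff p q (m + 1) ∈ Set.Icc (1 / (4 * p * q) / (m + 1) : ℝ) (1 / (m + 1)) := by
  constructor
  · rw [centralBinomCoeff, div_div, div_le_div_iff₀ (by positivity) (by positivity), one_mul]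
    exact_mod_cast (four_pow_le_mul_centralBinom_mul_centralBinom hp hq (m := m + 1)
      m.succ_pos).trans_eq (by ring)
  · rw [centralBinomCoeff, div_le_div_iff₀ (by positivity) (by positivity), one_mul, mul_comm]
    exact_mod_cast mul_centralBinom_mul_centralBinom_le hp hq (m + 1)

noncomputable def radialPoint (p q : ℕ) (L : ℝ) : ℂ :=
  ((4 ^ (p + q))⁻¹ * (1 - exp (-L)) : ℝ)

lemma norm_radialPoint_sub (p q : ℕ) (L : ℝ) :
    ‖radialPoint p q L - ((4 ^ (p + q))⁻¹ : ℝ)‖ = (4 ^ (p + q))⁻¹ * exp (-L) := by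
  rw [show radialPoint p q L - ((4 ^ (p + q))⁻¹ : ℝ) = ((-((4 ^ (p + q))⁻¹ * exp (-L))) : ℝ) by
      push_cast [radialPoint]; ring,
    Complex.norm_real, norm_neg, norm_of_nonneg (by positivity)]

lemma radialPoint_mem_ball (p q : ℕ) {L : ℝ} (hL : 0 < L) :
    radialPoint p q L ∈ Metric.ball 0 (4 ^ (p + q))⁻¹ := by
  have hexp : exp (-L) < 1 := exp_lt_one_iff.mpr (by linarith)
  have hr : (0 : ℝ) < (4 ^ (p + q))⁻¹ := by positivity
  rw [mem_ball_zero_iff, radialPoint, Complex.norm_real, norm_of_nonneg (by nlinarith)]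
  nlinarith [exp_pos (-L)]

lemma norm_centralBinomSeries_radialPoint_mem_Icc (hp : 0 < p) (hq : 0 < q) {L : ℝ}
    (hL : 0 ≤ L) :
    ‖centralBinomSeries p q (radialPoint p q L)‖ ∈ Set.Icc (1 + L / (4 * p * q)) (1 + L) := by
  have hseries : centralBinomSeries p q (radialPoint p q L) =
      ((∑' m, centralBinomCoeff p q m * (1 - exp (-L)) ^ m : ℝ) : ℂ) := by
    rw [centralBinomSeries, radialPoint, Complex.ofReal_tsum]
    refine tsum_congr fun m ↦ ?_
    push_cast [centralBinomCoeff]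
    rw [mul_pow, inv_pow, ← pow_mul]
    ring
  have hbounds := tsum_mul_pow_mem_Icc_of_mem_Icc_div_succ (by positivity)
    (centralBinomCoeff_succ_mem_Icc hp hq)
    (sub_nonneg.mpr (exp_le_one_iff.mpr (neg_nonpos.mpr hL))) (by simp [exp_pos])
  have hcoeff0 : centralBinomCoeff p q 0 = 1 := by simp [centralBinomCoeff]
  rw [sub_sub_cancel, log_exp, neg_neg, hcoeff0, one_div_mul_eq_div, one_mul] at hbounds
  rw [hseries, Complex.norm_real, norm_of_nonneg (by
    linarith [hbounds.1, show 0 ≤ L / (4 * p * q) by positivity])]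
  exact hbounds

lemma tendsto_norm_centralBinomSeries_radialPoint (hp : 0 < p) (hq : 0 < q) :
    Tendsto (fun L ↦ ‖centralBinomSeries p q (radialPoint p q L)‖) atTop atTop :=
  tendsto_atTop_mono' atTop ((eventually_ge_atTop 0).mono fun _ hL ↦
      (norm_centralBinomSeries_radialPoint_mem_Icc hp hq hL).1)
    (tendsto_atTop_add_const_left _ 1 (tendsto_id.atTop_div_const (by positivity)))

lemma tendsto_norm_radialPoint_sub_mul_pow (hp : 0 < p) (hq : 0 < q) (m : ℕ) :
    Tendsto (fun L ↦ ‖radialPoint p q L - ((4 ^ (p + q))⁻¹ : ℝ)‖ *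
      ‖centralBinomSeries p q (radialPoint p q L)‖ ^ m) atTop (𝓝 0) := by
  have hlim : Tendsto (fun L ↦ (4 ^ (p + q))⁻¹ * (exp (-L) * (1 + L) ^ m)) atTop (𝓝 0) := by
    simpa using (tendsto_exp_neg_mul_one_add_pow_atTop m).const_mul ((4 : ℝ) ^ (p + q))⁻¹
  refine squeeze_zero' (Eventually.of_forall fun L ↦ by positivity)
    ((eventually_ge_atTop 0).mono fun L hL ↦ ?_) hlim
  rw [norm_radialPoint_sub, mul_assoc]
  gcongr
  exact (norm_centralBinomSeries_radialPoint_mem_Icc hp hq hL).2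

end CentralBinomSeries

theorem height_two_series_not_algebraic_general
    (p q : ℕ) (hp : 0 < p) (hq : 0 < q) :
    ¬ IsAlgebraicFn (fun z : ℂ => ∑' m : ℕ,
        (((2 * p * m)! * (2 * q * m)! : ℂ) / (((p * m)!) ^ 2 * ((q * m)!) ^ 2)) * z ^ m) := by
  rw [tsum_factorial_ratio_eq_centralBinomSeries]
  rintro ⟨P, hP0, ε, hε, hPε⟩
  have hne : ∀ᶠ L in atTop,
      (P.map (evalRingHom (radialPoint p q L))).eval
        (centralBinomSeries p q (radialPoint p q L)) ≠ 0 :=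
    eventually_eval_map_ne_zero hP0
      (Eventually.of_forall fun L ↦ sub_ne_zero.mp <| norm_pos_iff.mp <| by
        rw [norm_radialPoint_sub]; positivity)
      (tendsto_norm_centralBinomSeries_radialPoint hp hq)
      (tendsto_norm_radialPoint_sub_mul_pow hp hq)
  obtain ⟨L, hL, hL0⟩ := (hne.and (eventually_gt_atTop 0)).exists
  exact hL <| (analyticOnNhd_centralBinomSeries p q).eval_map_evalRingHom_eq_zero
    (convex_ball 0 _).isPreconnected (Metric.mem_ball_self (by positivity))
    (Metric.eventually_nhds_iff_ball.mpr ⟨ε, hε, fun t ht ↦ hPε t (by simpa using ht)⟩)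
    (radialPoint_mem_ball p q hL0)

theorem height_two_series_not_algebraic
    (p q : ℕ) (hp : 0 < p) (hq : 0 < q) (hpq : Nat.Coprime p q) :
    ¬ IsAlgebraicFn (fun z : ℂ => ∑' m : ℕ,
        (((2 * p * m)! * (2 * q * m)! : ℂ) / (((p * m)!) ^ 2 * ((q * m)!) ^ 2)) * z ^ m) :=
  height_two_series_not_algebraic_general p q hp hq
end
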